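/- For every n ≥ 3 and ℓ ≥ 1, the set agreement valency map val on χ^ℓ(σ) satisfies containment: for all simplexes τ′, τ ∈ χ^ℓ(σ) with τ′ ⊆ τ, one has val(τ′) ⊆ val(τ) (i.e., val is a carrier map). -/

import Mathlib

open scoped Classical

/-- Vertices of the ℓ-th chromatic subdivision of the standard simplex on `Fin n`. -/
def ChromV (n : ℕ) : ℕ → Type
  | 0 => Fin n
  | ℓ + 1 => Fin n × Finset (ChromV n ℓ)

instance chromVDecEq (n : ℕ) : ∀ ℓ, DecidableEq (ChromV n ℓ)
  | 0 => inferInstanceAs (DecidableEq (Fin n))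
  | ℓ + 1 =>
    letI := chromVDecEq n ℓ
    inferInstanceAs (DecidableEq (Fin n × Finset (ChromV n ℓ)))

/-- The color of a vertex of the ℓ-th chromatic subdivision. -/
def chromCol (n : ℕ) : ∀ ℓ, ChromV n ℓ → Fin n
  | 0, v => v
  | _ + 1, v => v.1

/-- `ids γ`: the set of colors of the vertices of a simplex `γ`. -/
def ids {n ℓ : ℕ} (γ : Finset (ChromV n ℓ)) : Finset (Fin n) :=
  γ.image (chromCol n ℓ)

/-- One step of standard chromatic subdivision of a set of (nonempty) simplexes. -/
def subdiv {α : Type} {n : ℕ} (col : α → Fin n) (K : Set (Finset α)) :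
    Set (Finset (Fin n × Finset α)) :=
  { s | s.Nonempty ∧
    (∀ v ∈ s, v.2 ∈ K ∧ v.1 ∈ v.2.image col) ∧
    (∀ u ∈ s, ∀ v ∈ s, u ≠ v → u.1 ≠ v.1) ∧
    (∀ u ∈ s, ∀ v ∈ s, u.2 ⊆ v.2 ∨ v.2 ⊆ u.2) ∧
    (∀ u ∈ s, ∀ v ∈ s, u.1 ∈ v.2.image col → u.2 ⊆ v.2) }

/-- The faces of a simplex `τ`: its nonempty subsets. -/
def facesOf {α : Type} (τ : Finset α) : Set (Finset α) :=
  { s | s.Nonempty ∧ s ⊆ τ }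

/-- The ℓ-th chromatic subdivision `χ^ℓ(ρ)` of a face `ρ` of σ,
as a subcomplex of `χ^ℓ(σ)`. -/
def chromSub (n : ℕ) (ρ : Finset (Fin n)) : ∀ ℓ, Set (Finset (ChromV n ℓ))
  | 0 => facesOf ρ
  | ℓ + 1 => subdiv (chromCol n ℓ) (chromSub n ρ ℓ)

/-- Iterated chromatic subdivision of a subcomplex sitting at level ℓ. -/
def iterSub (n ℓ : ℕ) : ∀ m, Set (Finset (ChromV n ℓ)) → Set (Finset (ChromV n (ℓ + m)))
  | 0, K => K
  | m + 1, K => subdiv (chromCol n (ℓ + m)) (iterSub n ℓ m K)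

/-- `χ^m(τ)` for a simplex `τ ∈ χ^ℓ(σ)`: the subcomplex of `χ^{ℓ+m}(σ)` obtained by
iterated subdivision of `τ` and its faces. -/
def subOf {n ℓ : ℕ} (m : ℕ) (τ : Finset (ChromV n ℓ)) : Set (Finset (ChromV n (ℓ + m))) :=
  iterSub n ℓ m (facesOf τ)

/-- The vertices of a subcomplex. -/
def vertexSet {n ℓ : ℕ} (L : Set (Finset (ChromV n ℓ))) : Set (ChromV n ℓ) :=
  { v | ∃ s ∈ L, v ∈ s }

/-- `c(L)`: the set of values taken by a coloring `c` on the vertices of a subcomplex `L`. -/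
def colorSet {n ℓ : ℕ} {β : Type} (c : ChromV n ℓ → β) (L : Set (Finset (ChromV n ℓ))) :
    Set β :=
  c '' vertexSet L

/-- The carrier of a simplex `γ ∈ χ^ℓ(σ)`: the smallest face `ρ` of σ with `γ ∈ χ^ℓ(ρ)`,
realized as the intersection of all such faces. -/
noncomputable def carr {n ℓ : ℕ} (γ : Finset (ChromV n ℓ)) : Finset (Fin n) :=
  Finset.univ.filter fun i => ∀ ρ : Finset (Fin n), γ ∈ chromSub n ρ ℓ → i ∈ ρ

/-- The set agreement valency map: `val(τ) = ids(τ)` if `|τ| ≤ n-2`, else `carr(τ)`. -/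
noncomputable def saVal {n ℓ : ℕ} (τ : Finset (ChromV n ℓ)) : Finset (Fin n) :=
  if τ.card ≤ n - 2 then ids τ else carr τ

/-- The weak symmetry breaking valency map: `{1}` on simplexes of dimension ≤ n-3,
`{0,1}` otherwise. -/
def wsbVal {n ℓ : ℕ} (τ : Finset (ChromV n ℓ)) : Set (Fin 2) :=
  if τ.card ≤ n - 2 then {1} else Set.univ

/-- The simplicial map on the ℓ-th chromatic subdivision induced functorially by a
map `f` on the colors/vertices of σ. -/
def vmap (n : ℕ) (f : Fin n → Fin n) : ∀ ℓ, ChromV n ℓ → ChromV n ℓ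
  | 0, v => f v
  | ℓ + 1, v => (f v.1, v.2.image (vmap n f ℓ))

/-- The order-preserving bijection between two faces `s` and `t` of σ of the same
cardinality (extended by the identity elsewhere). -/
noncomputable def opBij {n : ℕ} (s t : Finset (Fin n)) (i : Fin n) : Fin n :=
  if h : i ∈ s ∧ s.card = t.card then
    ↑(t.orderIsoOfFin rfl (Fin.cast h.2 ((s.orderIsoOfFin rfl).symm ⟨i, h.1⟩)))
  else i

/-- A coloring of `χ^L(σ)` is symmetric if it is invariant under the order-preserving
simplicial bijections between subdivided faces of σ of the same dimension. -/
def SymmColoring {n L : ℕ} {β : Type} (b : ChromV n L → β) : Prop :=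
  ∀ s t : Finset (Fin n), s.Nonempty → t.Nonempty → s ≠ t → s.card = t.card →
    ∀ v ∈ vertexSet (chromSub n s L), b (vmap n (opBij s t) L v) = b v

/-- Transport of vertices along an equality of levels. -/
def castV (n : ℕ) {a b : ℕ} (h : a = b) : ChromV n a → ChromV n b :=
  fun v => h ▸ v

lemma ids_mono {n ℓ : ℕ} {γ' γ : Finset (ChromV n ℓ)} (h : γ' ⊆ γ) : ids γ' ⊆ ids γ :=
  Finset.image_subset_image h

lemma ids_subset_of_mem_chromSub {n : ℕ} {ρ : Finset (Fin n)} :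
    ∀ {ℓ} {γ : Finset (ChromV n ℓ)}, γ ∈ chromSub n ρ ℓ → ids γ ⊆ ρ
  | 0, _, hγ => by
      rintro _ hi
      obtain ⟨v, hv, rfl⟩ := Finset.mem_image.mp hi
      exact hγ.2 hv
  | _ + 1, _, hγ => by
      rintro _ hi
      obtain ⟨v, hv, rfl⟩ := Finset.mem_image.mp hi
      obtain ⟨hv_mem, hv_col⟩ := hγ.2.1 v hv
      exact ids_subset_of_mem_chromSub hv_mem hv_col

lemma ids_subset_carr {n ℓ : ℕ} (γ : Finset (ChromV n ℓ)) : ids γ ⊆ carr γ := fun _ hi =>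
  Finset.mem_filter.mpr ⟨Finset.mem_univ _, fun _ hρ => ids_subset_of_mem_chromSub hρ hi⟩

lemma subdiv_of_subset {α : Type} {n : ℕ} {col : α → Fin n} {K : Set (Finset α)}
    {s t : Finset (Fin n × Finset α)} (hs : s ∈ subdiv col K) (hts : t ⊆ s)
    (ht : t.Nonempty) : t ∈ subdiv col K := by
  obtain ⟨_, h₁, h₂, h₃, h₄⟩ := hs
  exact ⟨ht, fun v hv => h₁ v (hts hv), fun u hu v hv => h₂ u (hts hu) v (hts hv),
    fun u hu v hv => h₃ u (hts hu) v (hts hv), fun u hu v hv => h₄ u (hts hu) v (hts hv)⟩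

lemma chromSub_of_subset {n : ℕ} {ρ : Finset (Fin n)} :
    ∀ {ℓ} {γ' γ : Finset (ChromV n ℓ)}, γ ∈ chromSub n ρ ℓ → γ' ⊆ γ → γ'.Nonempty →
      γ' ∈ chromSub n ρ ℓ
  | 0, _, _, hγ, hsub, hne => ⟨hne, hsub.trans hγ.2⟩
  | _ + 1, _, _, hγ, hsub, hne => subdiv_of_subset hγ hsub hne

lemma carr_mono {n ℓ : ℕ} {γ' γ : Finset (ChromV n ℓ)} (hsub : γ' ⊆ γ) (hne : γ'.Nonempty) :
    carr γ' ⊆ carr γ := fun _ hi =>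
  Finset.mem_filter.mpr ⟨Finset.mem_univ _,
    fun _ hρ => (Finset.mem_filter.mp hi).2 _ (chromSub_of_subset hρ hsub hne)⟩

theorem saVal_containment_general
    (n ℓ : ℕ)
    (τ' τ : Finset (ChromV n ℓ))
    (hsub : τ' ⊆ τ) :
    saVal τ' ⊆ saVal τ := by
  unfold saVal
  split_ifs with hτ'_small hτ_small hτ_small
  · exact ids_mono hsub
  · exact (ids_mono hsub).trans (ids_subset_carr τ)
  · exact absurd ((Finset.card_le_card hsub).trans hτ_small) hτ'_small
  · exact carr_mono hsub (Finset.card_pos.mp (by omega))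

/-- Containment: the set agreement valency map is a carrier map. -/
theorem saVal_containment
    (n ℓ : ℕ) (hn : 3 ≤ n) (hℓ : 1 ≤ ℓ)
    (τ' τ : Finset (ChromV n ℓ))
    (hτ' : τ' ∈ chromSub n Finset.univ ℓ) (hτ : τ ∈ chromSub n Finset.univ ℓ)
    (hsub : τ' ⊆ τ) :
    saVal τ' ⊆ saVal τ :=
  saVal_containment_general n ℓ τ' τ hsub
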